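/- Let (X_1,…,X_n) be an H-frame on an open set V ⊆ ℝⁿ, let a ∈ V, let f be a smooth function defined near a, and let N ∈ ℕ. Then f has order N at a if and only if the following two conditions hold: (i) X^α f(a) = 0 for every multi-index α with ⟨α⟩ < N, and (ii) X^α f(a) ≠ 0 for at least one multi-index α with ⟨α⟩ = N. -/

import Mathlib

open scoped BigOperators
open Filter Topology

namespace Carnot

/-- Anisotropic dilation `t · x = (t^{w_1} x_1, …, t^{w_n} x_n)`. -/
def dil {n : ℕ} (w : Fin n → ℕ) (t : ℝ) (x : Fin n → ℝ) : Fin n → ℝ :=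
  fun i => t ^ (w i) * x i

/-- Weighted length `⟨α⟩` of a multi-index. -/
def wlen {n : ℕ} (w : Fin n → ℕ) (α : Fin n → ℕ) : ℕ := ∑ i, w i * α i

/-- Length `|α|` of a multi-index. -/
def mlen {n : ℕ} (α : Fin n → ℕ) : ℕ := ∑ i, α i

/-- A vector field acting on a function: `(Xf)(x) = Df(x)[X(x)]`. -/
noncomputable def vf {n : ℕ} (X : (Fin n → ℝ) → (Fin n → ℝ)) (f : (Fin n → ℝ) → ℝ) :
    (Fin n → ℝ) → ℝ :=
  fun x => fderiv ℝ f x (X x)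

/-- Iterated action `X_I f = X_{i_1}(X_{i_2}(⋯(X_{i_k} f)))`. -/
noncomputable def vfSeq {n : ℕ} (X : Fin n → (Fin n → ℝ) → (Fin n → ℝ)) :
    List (Fin n) → ((Fin n → ℝ) → ℝ) → ((Fin n → ℝ) → ℝ)
  | [], f => f
  | i :: I, f => vf (X i) (vfSeq X I f)

/-- Weight `⟨I⟩` of a finite sequence of indices. -/
def seqW {n : ℕ} (w : Fin n → ℕ) (I : List (Fin n)) : ℕ := (I.map w).sum

/-- The list `(1,…,1,2,…,2,…,n,…,n)` with `i` repeated `α i` times. -/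
def multiList {n : ℕ} (α : Fin n → ℕ) : List (Fin n) :=
  (List.finRange n).flatMap fun i => List.replicate (α i) i

/-- `X^α f = X_1^{α_1} ⋯ X_n^{α_n} f`. -/
noncomputable def vfPow {n : ℕ} (X : Fin n → (Fin n → ℝ) → (Fin n → ℝ)) (α : Fin n → ℕ)
    (f : (Fin n → ℝ) → ℝ) : (Fin n → ℝ) → ℝ :=
  vfSeq X (multiList α) f

/-- Partial derivative `∂^α f`. -/
noncomputable def pdPow {n : ℕ} (α : Fin n → ℕ) (f : (Fin n → ℝ) → ℝ) : (Fin n → ℝ) → ℝ :=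
  vfPow (fun i => fun _ => Pi.single i (1 : ℝ)) α f

/-- Lie bracket of two vector fields. -/
noncomputable def lieBk {n : ℕ} (X Y : (Fin n → ℝ) → (Fin n → ℝ)) : (Fin n → ℝ) → (Fin n → ℝ) :=
  fun x => fderiv ℝ Y x (X x) - fderiv ℝ X x (Y x)

/-- A weight sequence: non-decreasing, positive, starting at `1`. -/
structure IsWeight {n : ℕ} (w : Fin n → ℕ) : Prop where
  mono : Monotone w
  pos : ∀ i, 0 < w i
  first : ∀ h : 0 < n, w ⟨0, h⟩ = 1

/-- An `H`-frame on `V`. -/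
structure IsHFrame {n : ℕ} (w : Fin n → ℕ) (X : Fin n → (Fin n → ℝ) → (Fin n → ℝ))
    (V : Set (Fin n → ℝ)) : Prop where
  smooth : ∀ j, ContDiffOn ℝ (⊤ : ℕ∞) (X j) V
  basis : ∀ x ∈ V, LinearIndependent ℝ fun j => X j x
  bracket : ∃ L : Fin n → Fin n → Fin n → (Fin n → ℝ) → ℝ,
    (∀ i j k, ContDiffOn ℝ (⊤ : ℕ∞) (L i j k) V) ∧
    (∀ i j k, ¬ w k ≤ w i + w j → ∀ x ∈ V, L i j k x = 0) ∧
    ∀ i j, ∀ x ∈ V, lieBk (X i) (X j) x = ∑ k, L i j k x • X k x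

/-- `f` has order `≥ N` at `a` with respect to the frame `X`. -/
def OrderGe {n : ℕ} (w : Fin n → ℕ) (X : Fin n → (Fin n → ℝ) → (Fin n → ℝ))
    (f : (Fin n → ℝ) → ℝ) (a : Fin n → ℝ) (N : ℕ) : Prop :=
  ∀ I : List (Fin n), seqW w I < N → vfSeq X I f a = 0

/-- `f` has order exactly `N` at `a` with respect to the frame `X`. -/
def OrderEq {n : ℕ} (w : Fin n → ℕ) (X : Fin n → (Fin n → ℝ) → (Fin n → ℝ))
    (f : (Fin n → ℝ) → ℝ) (a : Fin n → ℝ) (N : ℕ) : Prop :=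
  OrderGe w X f a N ∧ ∃ I : List (Fin n), seqW w I = N ∧ vfSeq X I f a ≠ 0

/-- `f` has weight `≥ N`. -/
def WeightGe {n : ℕ} (w : Fin n → ℕ) (f : (Fin n → ℝ) → ℝ) (N : ℤ) : Prop :=
  ∀ α : Fin n → ℕ, (wlen w α : ℤ) < N → pdPow α f 0 = 0

/-- `f` has weight exactly `N`. -/
def WeightEq {n : ℕ} (w : Fin n → ℕ) (f : (Fin n → ℝ) → ℝ) (N : ℤ) : Prop :=
  WeightGe w f N ∧ ∃ α : Fin n → ℕ, (wlen w α : ℤ) = N ∧ pdPow α f 0 ≠ 0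

/-- A pseudo-norm for the anisotropic dilations. -/
structure IsPseudoNorm {n : ℕ} (w : Fin n → ℕ) (ρ : (Fin n → ℝ) → ℝ) : Prop where
  cont : Continuous ρ
  nonneg : ∀ x, 0 ≤ ρ x
  pos : ∀ x, x ≠ 0 → 0 < ρ x
  homog : ∀ t x, ρ (dil w t x) = |t| * ρ x

/-- Multi-indices with all entries `< B`. -/
def mIdx (n B : ℕ) : Finset (Fin n → ℕ) := Fintype.piFinset fun _ => Finset.range B

/-- The monomial `x^α`. -/
def monom {n : ℕ} (α : Fin n → ℕ) (x : Fin n → ℝ) : ℝ := ∏ i, x i ^ α i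

/-- Taylor coefficient `(1/α!) ∂^α f(0)`. -/
noncomputable def taylorCoeff {n : ℕ} (α : Fin n → ℕ) (f : (Fin n → ℝ) → ℝ) : ℝ :=
  ((∏ i, Nat.factorial (α i) : ℕ) : ℝ)⁻¹ * pdPow α f 0

/-- The homogeneous part `f^[ℓ]` of degree `ℓ` of the Taylor series of `f` at `0`. -/
noncomputable def homPart {n : ℕ} (w : Fin n → ℕ) (f : (Fin n → ℝ) → ℝ) (ℓ : ℕ) :
    (Fin n → ℝ) → ℝ :=
  fun x => ∑ α ∈ (mIdx n (ℓ + 1)).filter (fun α => wlen w α = ℓ),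
    taylorCoeff α f * monom α x

/-- `u_t = O(t^m)` in `C^∞(U)` as `t → 0`. -/
def BigOC {n : ℕ} (U : Set (Fin n → ℝ)) (u : ℝ → (Fin n → ℝ) → ℝ) (m : ℤ) : Prop :=
  ∀ K : Set (Fin n → ℝ), K ⊆ U → IsCompact K → ∀ β : Fin n → ℕ,
    ∃ C : ℝ, ∀ᶠ t in 𝓝[≠] (0 : ℝ), ∀ x ∈ K, |pdPow β (u t) x| ≤ C * |t| ^ m

/-- Componentwise `O(t^m)` in `C^∞(U)` for families of vector fields. -/
def BigOCVF {n : ℕ} (U : Set (Fin n → ℝ)) (u : ℝ → (Fin n → ℝ) → Fin n → ℝ)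
    (m : ℤ) : Prop :=
  ∀ K : Set (Fin n → ℝ), K ⊆ U → IsCompact K → ∀ β : Fin n → ℕ, ∀ k : Fin n,
    ∃ C : ℝ, ∀ᶠ t in 𝓝[≠] (0 : ℝ), ∀ x ∈ K,
      |pdPow β (fun y => u t y k) x| ≤ C * |t| ^ m

/-- `Θ = O_w(‖x‖^{w+m})` near `x = 0`. -/
def IsOw {n : ℕ} (w : Fin n → ℕ) (ρ : (Fin n → ℝ) → ℝ)
    (Θ : (Fin n → ℝ) → (Fin n → ℝ)) (m : ℤ) : Prop :=
  ∀ k, ∃ C : ℝ, ∀ᶠ x in 𝓝 (0 : Fin n → ℝ), |Θ x k| ≤ C * ρ x ^ ((w k : ℤ) + m)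

/-- A `w`-homogeneous map. -/
def WHomog {n : ℕ} (w : Fin n → ℕ) (φ : (Fin n → ℝ) → (Fin n → ℝ)) : Prop :=
  ∀ t x, φ (dil w t x) = dil w t (φ x)

/-- A map whose components are polynomial functions. -/
def IsPolyMap {n : ℕ} (φ : (Fin n → ℝ) → (Fin n → ℝ)) : Prop :=
  ∀ k, ∃ p : MvPolynomial (Fin n) ℝ, ∀ x, φ x k = MvPolynomial.eval x p

/-- A vector field homogeneous of degree `m`: `δ_t^* Y = t^m Y` for `t ≠ 0`. -/
def VFHomog {n : ℕ} (w : Fin n → ℕ) (Y : (Fin n → ℝ) → (Fin n → ℝ)) (m : ℤ) : Prop :=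
  ∀ t : ℝ, t ≠ 0 → ∀ x k, (t : ℝ) ^ (-(w k : ℤ)) * Y (dil w t x) k = t ^ m * Y x k

/-- A vector field has weight `W`: each component `X_k` has weight `≥ W + w_k`,
with equality for some `k`. -/
def VFWeightEq {n : ℕ} (w : Fin n → ℕ) (X : (Fin n → ℝ) → (Fin n → ℝ)) (W : ℤ) :
    Prop :=
  (∀ k, ∀ α : Fin n → ℕ, (wlen w α : ℤ) < W + w k →
    pdPow α (fun y => X y k) 0 = 0) ∧
  ∃ k, ∃ α : Fin n → ℕ, (wlen w α : ℤ) = W + w k ∧ pdPow α (fun y => X y k) 0 ≠ 0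

/-- The homogeneous part `X^[ℓ]` of degree `ℓ` of a vector field. -/
noncomputable def vfPart {n : ℕ} (w : Fin n → ℕ) (X : (Fin n → ℝ) → (Fin n → ℝ)) (ℓ : ℤ) :
    (Fin n → ℝ) → Fin n → ℝ :=
  fun x k => ∑ α ∈ (mIdx n ((ℓ + w k).toNat + 1)).filter
      (fun α => (wlen w α : ℤ) = ℓ + w k),
    taylorCoeff α (fun y => X y k) * monom α x

/-- `φ` produces privileged coordinates at `a` adapted to the `H`-frame `X`:
it is linearly adapted at `a` and each component has order `w_k` at `a`. -/
def PrivilegedAt {n : ℕ} (w : Fin n → ℕ) (X : Fin n → (Fin n → ℝ) → (Fin n → ℝ))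
    (a : Fin n → ℝ) (φ : (Fin n → ℝ) → (Fin n → ℝ)) : Prop :=
  (∀ j, fderiv ℝ φ a (X j a) = Pi.single j 1) ∧
  ∀ k, OrderEq w X (fun x => φ x k) a (w k)




variable {n : ℕ}

/-- Inversion count. -/
def invCnt : List (Fin n) → ℕ
  | [] => 0
  | i :: I => I.countP (fun j => decide (j < i)) + invCnt I

lemma invCnt_le (I : List (Fin n)) : invCnt I ≤ I.length * I.length := by
  induction I with
  | nil => simp [invCnt]
  | cons i I ih =>
    have h1 := List.countP_le_length (p := fun j => decide (j < i)) (l := I)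
    simp only [invCnt, List.length_cons]
    nlinarith

lemma invCnt_swap {i j : Fin n} (h : j < i) (P Q : List (Fin n)) :
    invCnt (P ++ j :: i :: Q) < invCnt (P ++ i :: j :: Q) := by
  induction P with
  | nil =>
    simp only [List.nil_append, invCnt, List.countP_cons, decide_eq_true_eq,
      if_pos h, if_neg (not_lt_of_gt h)]
    omega
  | cons p P ih =>
    have hperm : (P ++ j :: i :: Q).countP (fun x => decide (x < p))
        = (P ++ i :: j :: Q).countP (fun x => decide (x < p)) :=
      (List.Perm.append_left P (List.Perm.swap i j Q)).countP_eq _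
    simp only [List.cons_append, invCnt, List.append_eq]
    omega

lemma seqW_cons (w : Fin n → ℕ) (i : Fin n) (I : List (Fin n)) :
    seqW w (i :: I) = w i + seqW w I := by simp [seqW]

lemma seqW_append (w : Fin n → ℕ) (P Q : List (Fin n)) :
    seqW w (P ++ Q) = seqW w P + seqW w Q := by simp [seqW]

lemma seqW_eq_sum_count (w : Fin n → ℕ) (I : List (Fin n)) :
    seqW w I = ∑ k, w k * I.count k := by
  induction I with
  | nil => simp [seqW]
  | cons i I ih =>
    rw [seqW_cons, ih]
    have hc : ∀ k : Fin n, (i :: I).count k = I.count k + if i = k then 1 else 0 := by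
      intro k; rw [List.count_cons]; simp only [beq_iff_eq]
    simp only [hc, mul_add, Finset.sum_add_distrib, mul_ite, mul_one, mul_zero]
    rw [Finset.sum_ite_eq]
    simp [add_comm]

lemma count_multiList (α : Fin n → ℕ) (k : Fin n) : (multiList α).count k = α k := by
  have key : ∀ L : List (Fin n), (L.flatMap fun i => List.replicate (α i) i).count k
      = (L.map fun i => if i = k then α i else 0).sum := by
    intro L
    induction L with
    | nil => simp
    | cons a L ih =>
      rw [List.flatMap_cons, List.count_append, ih, List.map_cons, List.sum_cons,
        List.count_replicate]
      simp only [beq_iff_eq]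
  rw [multiList, key, ← Fin.sum_univ_def, Finset.sum_ite_eq']
  simp

lemma seqW_multiList (w : Fin n → ℕ) (α : Fin n → ℕ) : seqW w (multiList α) = wlen w α := by
  rw [seqW_eq_sum_count]
  simp [count_multiList, wlen]

lemma multiList_sorted (α : Fin n → ℕ) : (multiList α).Pairwise (· ≤ ·) := by
  rw [multiList, List.pairwise_flatMap]
  constructor
  · intro a _
    rw [List.pairwise_replicate]
    exact Or.inr le_rfl
  · refine (List.pairwise_lt_finRange n).imp ?_
    intro a b hab x hx y hy
    rw [List.eq_of_mem_replicate hx, List.eq_of_mem_replicate hy]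
    exact hab.le

lemma sorted_eq_multiList {I : List (Fin n)} (h : I.Pairwise (· ≤ ·)) :
    multiList (fun k => I.count k) = I :=
  (List.perm_iff_count.2 fun k => count_multiList _ k).eq_of_pairwise'
    (multiList_sorted _) h

lemma exists_desc {I : List (Fin n)} (h : ¬ I.Pairwise (· ≤ ·)) :
    ∃ (P : List (Fin n)) (i j : Fin n) (Q : List (Fin n)), I = P ++ i :: j :: Q ∧ j < i := by
  induction I with
  | nil => exact absurd List.Pairwise.nil h
  | cons a I ih =>
    by_cases hI : I.Pairwise (· ≤ ·)
    · cases I with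
      | nil => exact absurd (List.pairwise_singleton _ a) h
      | cons b J =>
        by_cases hab : a ≤ b
        · exfalso
          refine h (List.pairwise_cons.2 ⟨?_, hI⟩)
          intro c hc
          rcases List.mem_cons.1 hc with rfl | hc
          · exact hab
          · exact hab.trans ((List.pairwise_cons.1 hI).1 c hc)
        · exact ⟨[], a, b, J, rfl, lt_of_not_ge hab⟩
    · obtain ⟨P, i, j, Q, hIeq, hji⟩ := ih hI
      exact ⟨a :: P, i, j, Q, by rw [hIeq, List.cons_append], hji⟩



variable {n : ℕ} {U : Set (Fin n → ℝ)} {X : Fin n → (Fin n → ℝ) → (Fin n → ℝ)}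

lemma infty_add_one : ((⊤ : ℕ∞) : WithTop ℕ∞) + 1 ≤ ((⊤ : ℕ∞) : WithTop ℕ∞) := le_of_eq rfl

lemma cdOn_diffAt {F : Type*} [NormedAddCommGroup F] [NormedSpace ℝ F] (hU : IsOpen U)
    {g : (Fin n → ℝ) → F} (hg : ContDiffOn ℝ (⊤ : ℕ∞) g U) {x : Fin n → ℝ} (hx : x ∈ U) :
    DifferentiableAt ℝ g x :=
  (hg.differentiableOn (by simp)).differentiableAt (hU.mem_nhds hx)

lemma vf_contDiffOn (hU : IsOpen U) {Y : (Fin n → ℝ) → (Fin n → ℝ)}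
    (hY : ContDiffOn ℝ (⊤ : ℕ∞) Y U) {g : (Fin n → ℝ) → ℝ}
    (hg : ContDiffOn ℝ (⊤ : ℕ∞) g U) : ContDiffOn ℝ (⊤ : ℕ∞) (vf Y g) U :=
  (hg.fderiv_of_isOpen hU infty_add_one).clm_apply hY

lemma vfSeq_contDiffOn (hU : IsOpen U) (hX : ∀ j, ContDiffOn ℝ (⊤ : ℕ∞) (X j) U)
    {g : (Fin n → ℝ) → ℝ} (hg : ContDiffOn ℝ (⊤ : ℕ∞) g U) :
    ∀ I : List (Fin n), ContDiffOn ℝ (⊤ : ℕ∞) (vfSeq X I g) U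
  | [] => hg
  | i :: I => vf_contDiffOn hU (hX i) (vfSeq_contDiffOn hU hX hg I)

lemma vfSeq_congrOn (hU : IsOpen U) {u v : (Fin n → ℝ) → ℝ} (huv : ∀ x ∈ U, u x = v x) :
    ∀ (I : List (Fin n)) (x : Fin n → ℝ), x ∈ U → vfSeq X I u x = vfSeq X I v x := by
  intro I
  induction I with
  | nil => exact huv
  | cons i I ih =>
    intro x hx
    have hev : vfSeq X I u =ᶠ[nhds x] vfSeq X I v := by
      filter_upwards [hU.mem_nhds hx] with y hy using ih y hy
    simp only [vfSeq, vf, hev.fderiv_eq]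

lemma vfSeq_zero : ∀ I : List (Fin n), vfSeq X I (fun _ => (0 : ℝ)) = fun _ => 0 := by
  intro I
  induction I with
  | nil => rfl
  | cons i I ih =>
    funext x
    simp only [vfSeq, ih, vf, fderiv_const]
    simp

lemma vfSeq_add (hU : IsOpen U) (hX : ∀ j, ContDiffOn ℝ (⊤ : ℕ∞) (X j) U)
    {u v : (Fin n → ℝ) → ℝ} (hu : ContDiffOn ℝ (⊤ : ℕ∞) u U)
    (hv : ContDiffOn ℝ (⊤ : ℕ∞) v U) :
    ∀ (I : List (Fin n)) (x : Fin n → ℝ), x ∈ U →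
      vfSeq X I (fun y => u y + v y) x = vfSeq X I u x + vfSeq X I v x := by
  intro I
  induction I with
  | nil => intro x _; rfl
  | cons i I ih =>
    intro x hx
    have hev : vfSeq X I (fun y => u y + v y)
        =ᶠ[nhds x] fun y => vfSeq X I u y + vfSeq X I v y := by
      filter_upwards [hU.mem_nhds hx] with y hy using ih y hy
    simp only [vfSeq, vf]
    rw [hev.fderiv_eq, fderiv_fun_add (cdOn_diffAt hU (vfSeq_contDiffOn hU hX hu I) hx)
      (cdOn_diffAt hU (vfSeq_contDiffOn hU hX hv I) hx)]
    rfl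

lemma vfSeq_finsetSum (hU : IsOpen U) (hX : ∀ j, ContDiffOn ℝ (⊤ : ℕ∞) (X j) U)
    {κ : Type*} (s : Finset κ) (F : κ → (Fin n → ℝ) → ℝ)
    (hF : ∀ k ∈ s, ContDiffOn ℝ (⊤ : ℕ∞) (F k) U) (I : List (Fin n)) :
    ∀ x ∈ U, vfSeq X I (fun y => ∑ k ∈ s, F k y) x = ∑ k ∈ s, vfSeq X I (F k) x := by
  induction s using Finset.cons_induction with
  | empty =>
    intro x hx
    simp only [Finset.sum_empty, vfSeq_zero]
  | cons a s ha ih =>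
    intro x hx
    have h1 : ∀ y, ∑ k ∈ Finset.cons a s ha, F k y = F a y + ∑ k ∈ s, F k y := by
      intro y; rw [Finset.sum_cons]
    rw [vfSeq_congrOn hU (fun y _ => h1 y) I x hx,
      vfSeq_add hU hX (hF a (Finset.mem_cons_self a _ ))
        (ContDiffOn.sum fun k hk => hF k (Finset.mem_cons_of_mem hk)) I x hx,
      ih (fun k hk => hF k (Finset.mem_cons_of_mem hk)) x hx, Finset.sum_cons]

/-- The commutator identity `X(Yu) - Y(Xu) = [X,Y]u` at points of `U`. -/
lemma vf_comm (hU : IsOpen U) {Y Z : (Fin n → ℝ) → (Fin n → ℝ)}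
    (hY : ContDiffOn ℝ (⊤ : ℕ∞) Y U) (hZ : ContDiffOn ℝ (⊤ : ℕ∞) Z U)
    {u : (Fin n → ℝ) → ℝ} (hu : ContDiffOn ℝ (⊤ : ℕ∞) u U) {x : Fin n → ℝ} (hx : x ∈ U) :
    vf Y (vf Z u) x = vf Z (vf Y u) x + vf (lieBk Y Z) u x := by
  have hdu : ContDiffOn ℝ (⊤ : ℕ∞) (fderiv ℝ u) U := hu.fderiv_of_isOpen hU infty_add_one
  have h1 : fderiv ℝ (vf Z u) x
      = (fderiv ℝ u x).comp (fderiv ℝ Z x) + (fderiv ℝ (fderiv ℝ u) x).flip (Z x) :=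
    fderiv_clm_apply (cdOn_diffAt hU hdu hx) (cdOn_diffAt hU hZ hx)
  have h2 : fderiv ℝ (vf Y u) x
      = (fderiv ℝ u x).comp (fderiv ℝ Y x) + (fderiv ℝ (fderiv ℝ u) x).flip (Y x) :=
    fderiv_clm_apply (cdOn_diffAt hU hdu hx) (cdOn_diffAt hU hY hx)
  have hsymm : IsSymmSndFDerivAt ℝ u x :=
    (hu.contDiffAt (hU.mem_nhds hx)).isSymmSndFDerivAt (by
      rw [minSmoothness_of_isRCLikeNormedField]
      rw [show ((2:WithTop ℕ∞)) = ((2:ℕ∞) : WithTop ℕ∞) from rfl]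
      exact WithTop.coe_le_coe.2 (le_top : (2:ℕ∞) ≤ ⊤))
  simp only [vf, h1, h2, lieBk, ContinuousLinearMap.add_apply, ContinuousLinearMap.comp_apply,
    ContinuousLinearMap.flip_apply, map_sub]
  rw [hsymm (Y x) (Z x)]
  ring


variable {n : ℕ} {U : Set (Fin n → ℝ)} {X : Fin n → (Fin n → ℝ) → (Fin n → ℝ)}

lemma vfSeq_append (X : Fin n → (Fin n → ℝ) → (Fin n → ℝ)) (g : (Fin n → ℝ) → ℝ) :
    ∀ P Q : List (Fin n), vfSeq X (P ++ Q) g = vfSeq X P (vfSeq X Q g)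
  | [], _ => rfl
  | i :: P, Q => by
    simp only [List.cons_append, vfSeq]
    exact congrArg (vf (X i)) (vfSeq_append X g P Q)

section ListSum

variable {β γ : Type*}

lemma diffAt_listSum (T : List β) (F : β → (Fin n → ℝ) → ℝ) {x : Fin n → ℝ}
    (h : ∀ p ∈ T, DifferentiableAt ℝ (F p) x) :
    DifferentiableAt ℝ (fun y => (T.map (fun p => F p y)).sum) x := by
  induction T with
  | nil => simpa using differentiableAt_const (0 : ℝ)
  | cons a T ih =>
    simp only [List.map_cons, List.sum_cons]
    exact (h a (List.mem_cons_self)).add (ih fun p hp => h p (List.mem_cons_of_mem a hp))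

lemma fderiv_listSum (T : List β) (F : β → (Fin n → ℝ) → ℝ) {x : Fin n → ℝ}
    (h : ∀ p ∈ T, DifferentiableAt ℝ (F p) x) (v : Fin n → ℝ) :
    fderiv ℝ (fun y => (T.map (fun p => F p y)).sum) x v
      = (T.map (fun p => fderiv ℝ (F p) x v)).sum := by
  induction T with
  | nil => simp
  | cons a T ih =>
    simp only [List.map_cons, List.sum_cons]
    rw [fderiv_fun_add (h a (List.mem_cons_self))
      (diffAt_listSum T F fun p hp => h p (List.mem_cons_of_mem a hp))]
    rw [ContinuousLinearMap.add_apply, ih fun p hp => h p (List.mem_cons_of_mem a hp)]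

lemma sum_map_flatMap (T : List β) (k : β → List γ) (G : γ → ℝ) :
    ((T.flatMap k).map G).sum = (T.map fun q => ((k q).map G).sum).sum := by
  induction T with
  | nil => simp
  | cons a T ih => simp [List.flatMap_cons, ih]

lemma mul_listSum (c : ℝ) (T : List β) (F : β → ℝ) :
    c * (T.map F).sum = (T.map fun q => c * F q).sum := by
  induction T with
  | nil => simp
  | cons a T ih => simp [mul_add, ih]

end ListSum

/-- Pulling a coefficient function out through `vfSeq`. -/
lemma prodRep (w : Fin n → ℕ) (hU : IsOpen U) (hX : ∀ j, ContDiffOn ℝ (⊤ : ℕ∞) (X j) U)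
    (P : List (Fin n)) {c h : (Fin n → ℝ) → ℝ} (hc : ContDiffOn ℝ (⊤ : ℕ∞) c U)
    (hh : ContDiffOn ℝ (⊤ : ℕ∞) h U) :
    ∃ T : List (((Fin n → ℝ) → ℝ) × List (Fin n)),
      (∀ p ∈ T, ContDiffOn ℝ (⊤ : ℕ∞) p.1 U ∧ seqW w p.2 ≤ seqW w P ∧
        p.2.length ≤ P.length) ∧
      ∀ x ∈ U, vfSeq X P (fun y => c y * h y) x
        = (T.map (fun p => p.1 x * vfSeq X p.2 h x)).sum := by
  induction P with
  | nil =>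
    refine ⟨[(c, [])], ?_, ?_⟩
    · rintro p hp
      simp only [List.mem_singleton] at hp
      subst hp
      exact ⟨hc, le_rfl, le_rfl⟩
    · intro x _
      simp [vfSeq]
  | cons p P ih =>
    obtain ⟨T, hT, hrep⟩ := ih
    refine ⟨T.flatMap (fun q => [(vf (X p) q.1, q.2), (q.1, p :: q.2)]), ?_, ?_⟩
    · intro q' hq'
      rw [List.mem_flatMap] at hq'
      obtain ⟨q, hq, hq'mem⟩ := hq'
      obtain ⟨hq1, hq2, hq3⟩ := hT q hq
      rcases List.mem_cons.1 hq'mem with rfl | hq'mem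
      · exact ⟨vf_contDiffOn hU (hX p) hq1,
          hq2.trans (by rw [seqW_cons]; omega), hq3.trans (by simp)⟩
      · rw [List.mem_singleton] at hq'mem
        subst hq'mem
        refine ⟨hq1, ?_, ?_⟩
        · rw [seqW_cons, seqW_cons]; omega
        · simpa using hq3
    · intro x hx
      have hsm : ∀ q ∈ T, DifferentiableAt ℝ
          (fun y => q.1 y * vfSeq X q.2 h y) x := by
        intro q hq
        exact (cdOn_diffAt hU (hT q hq).1 hx).mul
          (cdOn_diffAt hU (vfSeq_contDiffOn hU hX hh q.2) hx)
      have hev : vfSeq X P (fun y => c y * h y)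
          =ᶠ[nhds x] fun y => (T.map (fun q => q.1 y * vfSeq X q.2 h y)).sum := by
        filter_upwards [hU.mem_nhds hx] with y hy using hrep y hy
      have step1 : vfSeq X (p :: P) (fun y => c y * h y) x
          = (T.map (fun q => fderiv ℝ (fun y => q.1 y * vfSeq X q.2 h y) x (X p x))).sum := by
        simp only [vfSeq, vf]
        rw [hev.fderiv_eq, fderiv_listSum T _ hsm]
      rw [step1, sum_map_flatMap]
      congr 1
      refine List.map_congr_left ?_
      intro q hq
      have hq1 := cdOn_diffAt hU (hT q hq).1 hx
      have hq2 := cdOn_diffAt hU (vfSeq_contDiffOn hU hX hh q.2) hx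
      rw [fderiv_fun_mul hq1 hq2]
      simp only [List.map_cons, List.map_nil, List.sum_cons, List.sum_nil, add_zero,
        ContinuousLinearMap.add_apply, ContinuousLinearMap.smul_apply, smul_eq_mul]
      have : vfSeq X (p :: q.2) h x = fderiv ℝ (vfSeq X q.2 h) x (X p x) := rfl
      rw [this]
      have : vf (X p) q.1 x = fderiv ℝ q.1 x (X p x) := rfl
      rw [this]
      ring

section Rep

/-- `u` is representable on `U` as a smooth-coefficient combination of the `X^α g`,
`⟨α⟩ ≤ M`. -/
def RepOn (w : Fin n → ℕ) (X : Fin n → (Fin n → ℝ) → (Fin n → ℝ)) (U : Set (Fin n → ℝ))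
    (g : (Fin n → ℝ) → ℝ) (M : ℕ) (u : (Fin n → ℝ) → ℝ) : Prop :=
  ∃ T : List (((Fin n → ℝ) → ℝ) × (Fin n → ℕ)),
    (∀ p ∈ T, ContDiffOn ℝ (⊤ : ℕ∞) p.1 U ∧ wlen w p.2 ≤ M) ∧
    ∀ x ∈ U, u x = (T.map (fun p => p.1 x * vfPow X p.2 g x)).sum

variable {w : Fin n → ℕ} {g : (Fin n → ℝ) → ℝ}

lemma repOn_zero (M : ℕ) : RepOn w X U g M (fun _ => 0) :=
  ⟨[], by simp, by simp⟩

lemma RepOn.congr {M : ℕ} {u v : (Fin n → ℝ) → ℝ} (h : RepOn w X U g M u)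
    (huv : ∀ x ∈ U, u x = v x) : RepOn w X U g M v := by
  obtain ⟨T, hT, hrep⟩ := h
  exact ⟨T, hT, fun x hx => (huv x hx) ▸ hrep x hx⟩

lemma RepOn.mono {M M' : ℕ} (hMM' : M ≤ M') {u : (Fin n → ℝ) → ℝ}
    (h : RepOn w X U g M u) : RepOn w X U g M' u := by
  obtain ⟨T, hT, hrep⟩ := h
  exact ⟨T, fun p hp => ⟨(hT p hp).1, (hT p hp).2.trans hMM'⟩, hrep⟩

lemma RepOn.add {M : ℕ} {u v : (Fin n → ℝ) → ℝ} (hu : RepOn w X U g M u)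
    (hv : RepOn w X U g M v) : RepOn w X U g M (fun x => u x + v x) := by
  obtain ⟨T₁, hT₁, hrep₁⟩ := hu
  obtain ⟨T₂, hT₂, hrep₂⟩ := hv
  refine ⟨T₁ ++ T₂, ?_, ?_⟩
  · intro p hp
    rcases List.mem_append.1 hp with hp | hp
    exacts [hT₁ p hp, hT₂ p hp]
  · intro x hx
    dsimp only
    rw [List.map_append, List.sum_append, hrep₁ x hx, hrep₂ x hx]

lemma RepOn.smul {M : ℕ} {c u : (Fin n → ℝ) → ℝ} (hc : ContDiffOn ℝ (⊤ : ℕ∞) c U)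
    (hu : RepOn w X U g M u) : RepOn w X U g M (fun x => c x * u x) := by
  obtain ⟨T, hT, hrep⟩ := hu
  refine ⟨T.map (fun p => (fun y => c y * p.1 y, p.2)), ?_, ?_⟩
  · intro p hp
    rw [List.mem_map] at hp
    obtain ⟨q, hq, rfl⟩ := hp
    exact ⟨hc.mul (hT q hq).1, (hT q hq).2⟩
  · intro x hx
    dsimp only
    rw [hrep x hx, mul_listSum, List.map_map]
    congr 1
    ext q
    simp [mul_assoc]

lemma repOn_listSum {β : Type*} {M : ℕ} (T : List β) (G : β → (Fin n → ℝ) → ℝ)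
    (h : ∀ q ∈ T, RepOn w X U g M (G q)) :
    RepOn w X U g M (fun x => (T.map (fun q => G q x)).sum) := by
  induction T with
  | nil => simpa using repOn_zero M
  | cons a T ih =>
    have h1 := (h a (List.mem_cons_self)).add
      (ih fun q hq => h q (List.mem_cons_of_mem a hq))
    refine h1.congr ?_
    intro x _
    simp

lemma repOn_finsetSum {κ : Type*} {M : ℕ} (s : Finset κ) (F : κ → (Fin n → ℝ) → ℝ)
    (h : ∀ k ∈ s, RepOn w X U g M (F k)) :
    RepOn w X U g M (fun x => ∑ k ∈ s, F k x) := by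
  induction s using Finset.cons_induction with
  | empty => simpa using repOn_zero M
  | cons a s ha ih =>
    have h1 := (h a (by simp)).add
      (ih fun k hk => h k (Finset.mem_cons_of_mem hk))
    refine h1.congr ?_
    intro x _
    rw [Finset.sum_cons]

end Rep

lemma cube_meas {a b m inv : ℕ} (h4 : a + 1 ≤ b) (h2 : inv ≤ a * a) (h3 : b ^ 3 ≤ m) :
    a ^ 3 + inv < m := by
  have ha : a < b := by omega
  have hb : 0 < b := by omega
  have e1 : a ^ 3 + inv ≤ a * a * (a + 1) := by nlinarith
  have e2 : a * a * (a + 1) ≤ a * a * b := Nat.mul_le_mul_left _ h4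
  have e3 : a * a * b < b * b * b := by
    have h5 : a * a < b * b := Nat.mul_lt_mul_of_lt_of_le ha ha.le hb
    exact Nat.mul_lt_mul_of_lt_of_le h5 le_rfl hb
  have e4 : b * b * b = b ^ 3 := by ring
  omega

/-- Main representation lemma: `X_I g` is a smooth-coefficient combination of the
`X^α g` with `⟨α⟩ ≤ ⟨I⟩`. -/
lemma mainRep (w : Fin n → ℕ) (hU : IsOpen U) (hX : ∀ j, ContDiffOn ℝ (⊤ : ℕ∞) (X j) U)
    (L : Fin n → Fin n → Fin n → (Fin n → ℝ) → ℝ)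
    (hL : ∀ i j k, ContDiffOn ℝ (⊤ : ℕ∞) (L i j k) U)
    (hLzero : ∀ i j k, ¬ w k ≤ w i + w j → ∀ x ∈ U, L i j k x = 0)
    (hbr : ∀ i j, ∀ x ∈ U, lieBk (X i) (X j) x = ∑ k, L i j k x • X k x) :
    ∀ (m : ℕ) (I : List (Fin n)) (g : (Fin n → ℝ) → ℝ),
      I.length ^ 3 + invCnt I < m → ContDiffOn ℝ (⊤ : ℕ∞) g U →
      RepOn w X U g (seqW w I) (vfSeq X I g) := by
  intro m
  induction m with
  | zero => omega
  | succ m ih =>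
    intro I g hm hg
    by_cases hs : I.Pairwise (· ≤ ·)
    · refine ⟨[(fun _ => (1 : ℝ), fun k => I.count k)], ?_, ?_⟩
      · intro p hp
        rw [List.mem_singleton] at hp
        subst hp
        exact ⟨contDiffOn_const, le_of_eq (seqW_eq_sum_count w I).symm⟩
      · intro x hx
        have : vfPow X (fun k => I.count k) g = vfSeq X I g := by
          rw [vfPow, sorted_eq_multiList hs]
        simp [this]
    · obtain ⟨P, i, j, Q, rfl, hji⟩ := exists_desc hs
      have hQsm : ContDiffOn ℝ (⊤ : ℕ∞) (vfSeq X Q g) U := vfSeq_contDiffOn hU hX hg Q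
      set F : Fin n → (Fin n → ℝ) → ℝ :=
        fun k => fun y => L i j k y * vfSeq X (k :: Q) g y with hF
      have hFsm : ∀ k, ContDiffOn ℝ (⊤ : ℕ∞) (F k) U :=
        fun k => (hL i j k).mul (vfSeq_contDiffOn hU hX hg (k :: Q))
      -- the commutation identity
      have claim1 : ∀ x ∈ U, vfSeq X (i :: j :: Q) g x
          = vfSeq X (j :: i :: Q) g x + ∑ k, F k x := by
        intro x hx
        have hc := vf_comm hU (hX i) (hX j) hQsm hx
        have hb : vf (lieBk (X i) (X j)) (vfSeq X Q g) x = ∑ k, F k x := by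
          simp only [vf, hbr i j x hx, hF]
          rw [map_sum]
          congr 1
          ext k
          rw [map_smul]
          rfl
        show vf (X i) (vf (X j) (vfSeq X Q g)) x = vf (X j) (vf (X i) (vfSeq X Q g)) x + _
        rw [hc, hb]
      -- split the composition accordingly
      have hsumsm : ContDiffOn ℝ (⊤ : ℕ∞) (fun y => ∑ k, F k y) U :=
        ContDiffOn.sum fun k _ => hFsm k
      have claim2 : ∀ x ∈ U, vfSeq X (P ++ i :: j :: Q) g x
          = vfSeq X (P ++ j :: i :: Q) g x + ∑ k, vfSeq X P (F k) x := by
        intro x hx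
        rw [vfSeq_append,
          vfSeq_congrOn hU claim1 P x hx,
          vfSeq_add hU hX (vfSeq_contDiffOn hU hX hg (j :: i :: Q)) hsumsm P x hx,
          vfSeq_finsetSum hU hX Finset.univ F (fun k _ => hFsm k) P x hx,
          ← vfSeq_append]
      -- lengths and weights bookkeeping
      have hseqI : seqW w (P ++ i :: j :: Q) = seqW w P + (w i + w j) + seqW w Q := by
        rw [seqW_append, seqW_cons, seqW_cons]; omega
      -- swapped term
      have repA : RepOn w X U g (seqW w (P ++ i :: j :: Q)) (vfSeq X (P ++ j :: i :: Q) g) := by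
        have hmeas : (P ++ j :: i :: Q).length ^ 3 + invCnt (P ++ j :: i :: Q) < m := by
          have h1 : (P ++ j :: i :: Q).length = (P ++ i :: j :: Q).length := by simp
          have h2 := invCnt_swap hji P Q
          rw [h1]
          omega
        have := ih (P ++ j :: i :: Q) g hmeas hg
        refine this.mono (le_of_eq ?_)
        rw [seqW_append, seqW_cons, seqW_cons, hseqI]
        omega
      -- bracket terms
      have repF : ∀ k : Fin n, RepOn w X U g (seqW w (P ++ i :: j :: Q)) (vfSeq X P (F k)) := by
        intro k
        by_cases hk : w k ≤ w i + w j
        · obtain ⟨T', hT', hrep'⟩ :=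
            prodRep (X := X) w hU hX P (hL i j k) (vfSeq_contDiffOn hU hX hg (k :: Q))
          have repQ : ∀ q ∈ T', RepOn w X U g (seqW w (P ++ i :: j :: Q))
              (fun x => q.1 x * vfSeq X (q.2 ++ k :: Q) g x) := by
            intro q hq
            obtain ⟨hq1, hq2, hq3⟩ := hT' q hq
            have hmeas : (q.2 ++ k :: Q).length ^ 3 + invCnt (q.2 ++ k :: Q) < m := by
              refine cube_meas (b := (P ++ i :: j :: Q).length) ?_ (invCnt_le _) ?_
              · simp only [List.length_append, List.length_cons]
                omega
              · omega
            have hrepsub := ih (q.2 ++ k :: Q) g hmeas hg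
            have hwt : seqW w (q.2 ++ k :: Q) ≤ seqW w (P ++ i :: j :: Q) := by
              rw [seqW_append, seqW_cons, hseqI]
              omega
            exact RepOn.smul hq1 (hrepsub.mono hwt)
          have := repOn_listSum T' (fun q => fun x => q.1 x * vfSeq X (q.2 ++ k :: Q) g x) repQ
          refine this.congr ?_
          intro x hx
          rw [hrep' x hx]
          congr 1
          refine List.map_congr_left ?_
          intro q _
          show q.1 x * vfSeq X (q.2 ++ k :: Q) g x = _
          rw [vfSeq_append]
        · refine (repOn_zero (seqW w (P ++ i :: j :: Q))).congr ?_
          intro x hx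
          have hFzero : ∀ y ∈ U, F k y = (fun _ => (0:ℝ)) y := by
            intro y hy
            simp [hF, hLzero i j k hk y hy]
          exact ((vfSeq_congrOn hU hFzero P x hx).trans (congrFun (vfSeq_zero P) x)).symm
      have := repA.add (repOn_finsetSum Finset.univ (fun k => vfSeq X P (F k))
        (fun k _ => repF k))
      refine this.congr ?_
      intro x hx
      exact (claim2 x hx).symm


/-- Characterization of the order of a function in terms of the sole
monomials `X^α`. -/

theorem order_iff_vfPow
    {n : ℕ} (hn : 0 < n) {w : Fin n → ℕ} (hw : IsWeight w)
    {V : Set (Fin n → ℝ)} (hV : IsOpen V)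
    {X : Fin n → (Fin n → ℝ) → (Fin n → ℝ)} (hX : IsHFrame w X V)
    {a : Fin n → ℝ} (ha : a ∈ V)
    {f : (Fin n → ℝ) → ℝ} {Uf : Set (Fin n → ℝ)}
    (hUf : Uf ∈ 𝓝 a) (hf : ContDiffOn ℝ (⊤ : ℕ∞) f Uf) (N : ℕ) :
    OrderEq w X f a N ↔
      ((∀ α : Fin n → ℕ, wlen w α < N → vfPow X α f a = 0) ∧
        ∃ α : Fin n → ℕ, wlen w α = N ∧ vfPow X α f a ≠ 0) := by
  classical
  obtain ⟨L, hLsm, hLzero, hbr⟩ := hX.bracket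
  set U : Set (Fin n → ℝ) := V ∩ interior Uf with hUdef
  have hUo : IsOpen U := hV.inter isOpen_interior
  have haU : a ∈ U := ⟨ha, mem_interior_iff_mem_nhds.2 hUf⟩
  have hXU : ∀ j, ContDiffOn ℝ (⊤ : ℕ∞) (X j) U :=
    fun j => ((hX.smooth j).of_le (by simp)).mono Set.inter_subset_left
  have hfU : ContDiffOn ℝ (⊤ : ℕ∞) f U :=
    (hf.of_le (by simp)).mono (fun x hx => interior_subset hx.2)
  have hLU : ∀ i j k, ContDiffOn ℝ (⊤ : ℕ∞) (L i j k) U :=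
    fun i j k => ((hLsm i j k).of_le (by simp)).mono Set.inter_subset_left
  have hLzU : ∀ i j k, ¬ w k ≤ w i + w j → ∀ x ∈ U, L i j k x = 0 :=
    fun i j k h x hx => hLzero i j k h x hx.1
  have hbrU : ∀ i j, ∀ x ∈ U, lieBk (X i) (X j) x = ∑ k, L i j k x • X k x :=
    fun i j x hx => hbr i j x hx.1
  have rep : ∀ I : List (Fin n), ∃ T : List (((Fin n → ℝ) → ℝ) × (Fin n → ℕ)),
      (∀ p ∈ T, wlen w p.2 ≤ seqW w I) ∧
      vfSeq X I f a = (T.map (fun p => p.1 a * vfPow X p.2 f a)).sum := by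
    intro I
    obtain ⟨T, hT, hrep⟩ := mainRep w hUo hXU L hLU hLzU hbrU
      (I.length ^ 3 + invCnt I + 1) I f (by omega) hfU
    exact ⟨T, fun p hp => (hT p hp).2, hrep a haU⟩
  constructor
  · rintro ⟨h1, I, hIw, hIne⟩
    refine ⟨?_, ?_⟩
    · intro α hα
      exact h1 (multiList α) (by rw [seqW_multiList]; exact hα)
    · by_contra hcon
      push_neg at hcon
      obtain ⟨T, hT, hrep⟩ := rep I
      apply hIne
      rw [hrep]
      refine List.sum_eq_zero ?_
      intro y hy
      rw [List.mem_map] at hy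
      obtain ⟨p, hp, rfl⟩ := hy
      have hle : wlen w p.2 ≤ N := hIw ▸ hT p hp
      rcases eq_or_lt_of_le hle with heq | hlt
      · rw [hcon p.2 heq, mul_zero]
      · have h0 := h1 (multiList p.2) (by rw [seqW_multiList]; exact hlt)
        rw [show vfPow X p.2 f = vfSeq X (multiList p.2) f from rfl, h0, mul_zero]
  · rintro ⟨h1, α, hαN, hαne⟩
    refine ⟨?_, multiList α, by rw [seqW_multiList]; exact hαN, hαne⟩
    intro I hI
    obtain ⟨T, hT, hrep⟩ := rep I
    rw [hrep]
    refine List.sum_eq_zero ?_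
    intro y hy
    rw [List.mem_map] at hy
    obtain ⟨p, hp, rfl⟩ := hy
    rw [h1 p.2 (lt_of_le_of_lt (hT p hp) hI), mul_zero]

end Carnot
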